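/- Let d ≥ 2 and ρ > 0, and let φ_ρ be the ρ-margin loss. Let g : ℝ → ℝ be non-decreasing and continuous with g(1+γ) < G and g(−1−γ) > −G for some G ≥ 0, and assume g(−t) + g(t) ≥ 0 for every t ∈ [0,1]. Then φ_ρ is H_g-calibrated with respect to the adversarial 0/1 loss ℓ_γ if and only if for every t ∈ [0,1]: φ_ρ(G−g(−t)) = φ_ρ(g(t)+G) and min{φ_ρ(Ā(t)), φ_ρ(−A̲(t))} > φ_ρ(G−g(−t)), where Ā(t) = max_{s ∈ [−t,t]} (g(s) − g(s−γ)) and A̲(t) = min_{s ∈ [−t,t]} (g(s) − g(s+γ)). -/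

import Mathlib

open scoped RealInnerProductSpace

noncomputable section

/-- A loss assigns a value to a predictor `f`, a point `x`, and a label `y` (±1). -/
abbrev Loss (d : ℕ) := ((EuclideanSpace ℝ (Fin d)) → ℝ) → (EuclideanSpace ℝ (Fin d)) → ℝ → ℝ

variable {d : ℕ}

/-- The inner (conditional) ℓ-risk. -/
def innerRisk (ℓ : Loss d) (f : EuclideanSpace ℝ (Fin d) → ℝ)
    (x : EuclideanSpace ℝ (Fin d)) (η : ℝ) : ℝ :=
  η * ℓ f x 1 + (1 - η) * ℓ f x (-1)

/-- The minimal inner ℓ-risk over a hypothesis set `H`. -/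
def minInnerRisk (ℓ : Loss d) (H : Set (EuclideanSpace ℝ (Fin d) → ℝ))
    (x : EuclideanSpace ℝ (Fin d)) (η : ℝ) : ℝ :=
  ⨅ f : H, innerRisk ℓ f x η

/-- ℓ₁ is H-calibrated with respect to ℓ₂. -/
def Calibrated (H : Set (EuclideanSpace ℝ (Fin d) → ℝ)) (ℓ₁ ℓ₂ : Loss d) : Prop :=
  ∀ ε > (0:ℝ), ∀ η ∈ Set.Icc (0:ℝ) 1, ∀ x : EuclideanSpace ℝ (Fin d), ‖x‖ ≤ 1 →
    ∃ δ > (0:ℝ), ∀ f ∈ H,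
      innerRisk ℓ₁ f x η < minInnerRisk ℓ₁ H x η + δ →
      innerRisk ℓ₂ f x η < minInnerRisk ℓ₂ H x η + ε

/-- The adversarial 0/1 loss with perturbation radius γ. -/
def advLoss (γ : ℝ) : Loss d := fun f x y =>
  ⨆ x' : Metric.closedBall x γ, (if y * f ↑x' ≤ 0 then (1:ℝ) else 0)

/-- A margin-based loss viewed as a loss. -/
def marginLoss (φ : ℝ → ℝ) : Loss d := fun f x y => φ (y * f x)

/-- The supremum-based surrogate of a margin-based loss. -/
def supLoss (γ : ℝ) (φ : ℝ → ℝ) : Loss d := fun f x y =>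
  ⨆ x' : Metric.closedBall x γ, φ (y * f ↑x')

/-- Infimum of f over the closed γ-ball around x. -/
def infBall (γ : ℝ) (f : EuclideanSpace ℝ (Fin d) → ℝ) (x : EuclideanSpace ℝ (Fin d)) : ℝ :=
  ⨅ x' : Metric.closedBall x γ, f ↑x'

/-- Supremum of f over the closed γ-ball around x. -/
def supBall (γ : ℝ) (f : EuclideanSpace ℝ (Fin d) → ℝ) (x : EuclideanSpace ℝ (Fin d)) : ℝ :=
  ⨆ x' : Metric.closedBall x γ, f ↑x'

/-- x is a distinguishing point for H. -/
def Distinguishing (γ : ℝ) (H : Set (EuclideanSpace ℝ (Fin d) → ℝ))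
    (x : EuclideanSpace ℝ (Fin d)) : Prop :=
  ‖x‖ ≤ 1 ∧ (∃ f ∈ H, 0 < infBall γ f x) ∧ (∃ g ∈ H, supBall γ g x < 0)

/-- H is regular for adversarial calibration. -/
def RegularAdv (γ : ℝ) (H : Set (EuclideanSpace ℝ (Fin d) → ℝ)) : Prop :=
  ∃ x, Distinguishing γ H x

/-- H is symmetric. -/
def SymmetricH (H : Set (EuclideanSpace ℝ (Fin d) → ℝ)) : Prop :=
  ∀ f ∈ H, -f ∈ H

/-- Linear hypothesis set. -/
def Hlin (d : ℕ) : Set (EuclideanSpace ℝ (Fin d) → ℝ) :=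
  { f | ∃ w : EuclideanSpace ℝ (Fin d), ‖w‖ = 1 ∧ f = fun x => (inner ℝ w x : ℝ) }

/-- Generalized linear hypothesis set. -/
def Hg (d : ℕ) (g : ℝ → ℝ) (G : ℝ) : Set (EuclideanSpace ℝ (Fin d) → ℝ) :=
  { f | ∃ (w : EuclideanSpace ℝ (Fin d)) (b : ℝ), ‖w‖ = 1 ∧ |b| ≤ G ∧
      f = fun x => g (inner ℝ w x : ℝ) + b }

/-- ReLU-based hypothesis set. -/
def Hrelu (d : ℕ) (G : ℝ) : Set (EuclideanSpace ℝ (Fin d) → ℝ) :=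
  Hg d (fun t => max t 0) G

/-- One-layer ReLU neural network hypothesis set. -/
def Hnn (d n : ℕ) (Λ W : ℝ) : Set (EuclideanSpace ℝ (Fin d) → ℝ) :=
  { f | ∃ (u : Fin n → ℝ) (w : Fin n → EuclideanSpace ℝ (Fin d)),
      (∑ j, |u j|) ≤ Λ ∧ (∀ j, ‖w j‖ ≤ W) ∧
      f = fun x => ∑ j, u j * max (inner ℝ (w j) x : ℝ) 0 }

/-- All (Borel) measurable functions. -/
def Hall (d : ℕ) : Set (EuclideanSpace ℝ (Fin d) → ℝ) :=
  { f | Measurable f }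

/-- The ρ-margin loss. -/
def phiRho (ρ t : ℝ) : ℝ := min 1 (max 0 (1 - t / ρ))


/-- Ā(t) = max_{s ∈ [−t,t]} (g(s) − g(s−γ)). -/
def Abar (g : ℝ → ℝ) (γ t : ℝ) : ℝ :=
  sSup ((fun s => g s - g (s - γ)) '' Set.Icc (-t) t)

/-- A̲(t) = min_{s ∈ [−t,t]} (g(s) − g(s+γ)). -/
def Alow (g : ℝ → ℝ) (γ t : ℝ) : ℝ :=
  sInf ((fun s => g s - g (s + γ)) '' Set.Icc (-t) t)

/-!
At a point `x` with `‖x‖ = r`, a predictor `z ↦ g ⟪w, z⟫ + b` of `H_g` is seen only through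
`s = ⟪w, x⟫`, which ranges over all of `[-r, r]` because `d ≥ 2`, and `b ∈ [-G, G]`. Its adversarial
risk is `η·1[g (s - γ) + b ≤ 0] + (1 - η)·1[0 ≤ g (s + γ) + b]`, with minimum `min η (1 - η)`, and
its margin risk depends only on `u = g s + b ∈ [g (-r) - G, g r + G]`; since `φ_ρ` is antitone the
margin risk is minimised at one of the two endpoints. If both endpoints are equally good and
`φ_ρ (G - g (-r))` lies below `φ_ρ (Ā r)` and `φ_ρ (-A̲ r)`, then a predictor that is wrong under
attack on the positive (negative) side has `u ≤ Ā r` (`-u ≤ -A̲ r`) and so pays a fixed excess of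
margin risk. If one of the conditions fails, some exact margin-risk minimiser has non-optimal
adversarial risk: at `η = 1` or `η = 0` with `u = Ā r` or `u = A̲ r`, or at the `η < 1/2` for which
the two endpoints tie.
-/

open Metric Set

section PhiRho

variable {ρ η : ℝ}

lemma phiRho_le_one (ρ t : ℝ) : phiRho ρ t ≤ 1 := min_le_left _ _

lemma phiRho_of_nonpos (hρ : 0 < ρ) {t : ℝ} (ht : t ≤ 0) : phiRho ρ t = 1 := by
  have : t / ρ ≤ 0 := div_nonpos_of_nonpos_of_nonneg ht hρ.le
  rw [phiRho, max_eq_right (by linarith), min_eq_left (by linarith)]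

lemma phiRho_antitone (hρ : 0 < ρ) : Antitone (phiRho ρ) := fun _ _ hab =>
  min_le_min le_rfl (max_le_max le_rfl (by linarith [div_le_div_of_nonneg_right hab hρ.le]))

lemma phiRho_lt_one (hρ : 0 < ρ) {t : ℝ} (ht : 0 < t) : phiRho ρ t < 1 :=
  (min_le_right _ _).trans_lt (max_lt one_pos (by linarith [div_pos ht hρ]))

def marginRiskAt (φ : ℝ → ℝ) (η u : ℝ) : ℝ := η * φ u + (1 - η) * φ (-u)

lemma le_marginRiskAt_of_nonneg (hρ : 0 < ρ) (hη : 0 ≤ η) {u v : ℝ} (hu : 0 ≤ u) (huv : u ≤ v) :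
    η * phiRho ρ v + (1 - η) ≤ marginRiskAt (phiRho ρ) η u := by
  rw [marginRiskAt, phiRho_of_nonpos hρ (neg_nonpos.2 hu), mul_one]
  gcongr
  exact phiRho_antitone hρ huv

lemma le_marginRiskAt_of_nonpos (hρ : 0 < ρ) (hη : η ≤ 1) {u v : ℝ} (hu : u ≤ 0) (huv : -u ≤ v) :
    η + (1 - η) * phiRho ρ v ≤ marginRiskAt (phiRho ρ) η u := by
  rw [marginRiskAt, phiRho_of_nonpos hρ hu, mul_one]
  have : 0 ≤ 1 - η := sub_nonneg.2 hη
  gcongr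
  exact phiRho_antitone hρ huv

lemma marginRiskAt_of_nonneg (hρ : 0 < ρ) {u : ℝ} (hu : 0 ≤ u) :
    marginRiskAt (phiRho ρ) η u = η * phiRho ρ u + (1 - η) := by
  rw [marginRiskAt, phiRho_of_nonpos hρ (neg_nonpos.2 hu), mul_one]

lemma marginRiskAt_of_nonpos (hρ : 0 < ρ) {u : ℝ} (hu : u ≤ 0) :
    marginRiskAt (phiRho ρ) η u = η + (1 - η) * phiRho ρ (-u) := by
  rw [marginRiskAt, phiRho_of_nonpos hρ hu, mul_one]

lemma min_marginRiskAt_le (hρ : 0 < ρ) (hη : η ∈ Icc (0 : ℝ) 1) {lo hi u : ℝ}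
    (hlo : lo ≤ u) (hhi : u ≤ hi) :
    min (marginRiskAt (phiRho ρ) η hi) (marginRiskAt (phiRho ρ) η lo) ≤
      marginRiskAt (phiRho ρ) η u := by
  rcases le_total 0 u with hu | hu
  · rw [min_le_iff, marginRiskAt_of_nonneg hρ (hu.trans hhi)]
    exact Or.inl (le_marginRiskAt_of_nonneg hρ hη.1 hu hhi)
  · rw [min_le_iff, marginRiskAt_of_nonpos hρ (hlo.trans hu)]
    exact Or.inr (le_marginRiskAt_of_nonpos hρ hη.2 hu (neg_le_neg hlo))

end PhiRho

def glmAdvRisk (g : ℝ → ℝ) (γ η s b : ℝ) : ℝ :=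
  η * (if g (s - γ) + b ≤ 0 then 1 else 0) + (1 - η) * (if 0 ≤ g (s + γ) + b then 1 else 0)


section InnerProductSpace

variable {E : Type*} [NormedAddCommGroup E] [InnerProductSpace ℝ E] {w x : E}

lemma inner_mem_Icc_of_norm_eq_one (hw : ‖w‖ = 1) (x : E) : ⟪w, x⟫ ∈ Icc (-‖x‖) ‖x‖ :=
  abs_le.1 (by simpa [hw] using abs_real_inner_le_norm w x)

lemma inner_mem_Icc_of_mem_closedBall (hw : ‖w‖ = 1) {γ : ℝ} {x' : E} (hx' : x' ∈ closedBall x γ) :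
    ⟪w, x'⟫ ∈ Icc (⟪w, x⟫ - γ) (⟪w, x⟫ + γ) := by
  have h := inner_mem_Icc_of_norm_eq_one hw (x' - x)
  have hγ : ‖x' - x‖ ≤ γ := by rwa [← dist_eq_norm]
  rw [inner_sub_right] at h
  constructor <;> linarith [h.1, h.2]

lemma add_smul_mem_closedBall (hw : ‖w‖ = 1) {γ c : ℝ} (hc : |c| ≤ γ) :
    x + c • w ∈ closedBall x γ := by
  rwa [mem_closedBall, dist_eq_norm, add_sub_cancel_left, norm_smul, hw, mul_one, Real.norm_eq_abs]

lemma inner_add_smul_self (hw : ‖w‖ = 1) (c : ℝ) : ⟪w, x + c • w⟫ = ⟪w, x⟫ + c := by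
  rw [inner_add_right, real_inner_smul_right, real_inner_self_eq_norm_sq, hw]
  ring

lemma exists_norm_eq_one_inner_eq (hE : 1 < Module.rank ℝ E) {s : ℝ} (hs : s ∈ Icc (-‖x‖) ‖x‖) :
    ∃ w : E, ‖w‖ = 1 ∧ ⟪w, x⟫ = s := by
  obtain ⟨v, hv, hvx⟩ : ∃ v : E, ‖v‖ = 1 ∧ ⟪v, x⟫ = ‖x‖ := by
    by_cases hx : x = 0
    · have : Nontrivial E := rank_pos_iff_nontrivial.1 (zero_lt_one.trans hE)
      obtain ⟨v, hv⟩ := exists_norm_eq E zero_le_one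
      exact ⟨v, hv, by simp [hx]⟩
    · refine ⟨‖x‖⁻¹ • x, norm_smul_inv_norm hx, ?_⟩
      rw [real_inner_smul_left, real_inner_self_eq_norm_sq]
      field_simp
  have hsphere : ∀ {u : E}, ‖u‖ = 1 → u ∈ sphere (0 : E) 1 := fun hu => by simpa using hu
  obtain ⟨w, hw, rfl⟩ := (isPreconnected_sphere hE 0 1).intermediate_value
    (hsphere (by rwa [norm_neg])) (hsphere hv) (f := fun u => ⟪u, x⟫)
    (continuous_id.inner continuous_const).continuousOn (by rwa [inner_neg_left, hvx])
  exact ⟨w, by simpa using hw, rfl⟩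

end InnerProductSpace

lemma one_lt_rank_euclideanSpace (hd : 2 ≤ d) : 1 < Module.rank ℝ (EuclideanSpace ℝ (Fin d)) := by
  rw [← Module.finrank_eq_rank, finrank_euclideanSpace_fin]
  exact_mod_cast hd

open Classical in
lemma iSup_ite_one_zero {ι : Sort*} [Nonempty ι] (p : ι → Prop) [DecidablePred p] :
    (⨆ i, if p i then (1 : ℝ) else 0) = if ∃ i, p i then 1 else 0 := by
  split_ifs with h
  · obtain ⟨i, hi⟩ := h
    refine le_antisymm (ciSup_le fun j => ?_) (le_ciSup_of_le ⟨1, ?_⟩ i (by simp [hi]))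
    · split_ifs <;> norm_num
    · rintro _ ⟨j, rfl⟩
      dsimp only
      split_ifs <;> norm_num
  · simp [not_exists.1 h]

section Risks

lemma innerRisk_marginLoss (φ : ℝ → ℝ) (f : EuclideanSpace ℝ (Fin d) → ℝ)
    (x : EuclideanSpace ℝ (Fin d)) (η : ℝ) :
    innerRisk (marginLoss φ) f x η = marginRiskAt φ η (f x) := by
  simp only [innerRisk, marginLoss, marginRiskAt, one_mul, neg_one_mul]

lemma minInnerRisk_eq_of_forall_le {ℓ : Loss d} {H : Set (EuclideanSpace ℝ (Fin d) → ℝ)}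
    {x : EuclideanSpace ℝ (Fin d)} {η m : ℝ} (hle : ∀ f ∈ H, m ≤ innerRisk ℓ f x η)
    (hex : ∃ f ∈ H, innerRisk ℓ f x η = m) : minInnerRisk ℓ H x η = m := by
  obtain ⟨f, hf, rfl⟩ := hex
  have : Nonempty H := ⟨⟨f, hf⟩⟩
  exact le_antisymm (ciInf_le ⟨_, forall_mem_range.2 fun f' : H => hle f' f'.2⟩ ⟨f, hf⟩)
    (le_ciInf fun f' => hle f' f'.2)

lemma Calibrated.innerRisk_le_of_le_minInnerRisk {H : Set (EuclideanSpace ℝ (Fin d) → ℝ)}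
    {ℓ₁ ℓ₂ : Loss d} (hcal : Calibrated H ℓ₁ ℓ₂) {η : ℝ} (hη : η ∈ Icc (0 : ℝ) 1)
    {x : EuclideanSpace ℝ (Fin d)} (hx : ‖x‖ ≤ 1) {f : EuclideanSpace ℝ (Fin d) → ℝ} (hf : f ∈ H)
    (hmin : innerRisk ℓ₁ f x η ≤ minInnerRisk ℓ₁ H x η) :
    innerRisk ℓ₂ f x η ≤ minInnerRisk ℓ₂ H x η :=
  le_of_forall_pos_lt_add fun ε hε => by
    obtain ⟨δ, hδ, hcalδ⟩ := hcal ε hε η hη x hx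
    exact hcalδ f hf (by linarith)

variable {γ : ℝ} {g : ℝ → ℝ} {w : EuclideanSpace ℝ (Fin d)}

lemma advLoss_glm_one (hγ : 0 ≤ γ) (hg : Monotone g) (hw : ‖w‖ = 1) (b : ℝ)
    (x : EuclideanSpace ℝ (Fin d)) :
    advLoss γ (fun z => g ⟪w, z⟫ + b) x 1 = if g (⟪w, x⟫ - γ) + b ≤ 0 then 1 else 0 := by
  classical
  have : Nonempty (closedBall x γ) := ⟨⟨x, mem_closedBall_self hγ⟩⟩
  unfold advLoss
  rw [iSup_ite_one_zero]
  refine if_congr ⟨fun ⟨⟨x', hx'⟩, h⟩ => ?_, fun h => ?_⟩ rfl rfl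
  · have := hg (inner_mem_Icc_of_mem_closedBall hw hx').1
    simp only [one_mul] at h
    linarith
  · refine ⟨⟨x + (-γ) • w, add_smul_mem_closedBall hw (by rw [abs_neg, abs_of_nonneg hγ])⟩, ?_⟩
    show 1 * (g ⟪w, x + (-γ) • w⟫ + b) ≤ 0
    rwa [inner_add_smul_self hw, one_mul, ← sub_eq_add_neg]

lemma advLoss_glm_neg_one (hγ : 0 ≤ γ) (hg : Monotone g) (hw : ‖w‖ = 1) (b : ℝ)
    (x : EuclideanSpace ℝ (Fin d)) :
    advLoss γ (fun z => g ⟪w, z⟫ + b) x (-1) = if 0 ≤ g (⟪w, x⟫ + γ) + b then 1 else 0 := by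
  classical
  have : Nonempty (closedBall x γ) := ⟨⟨x, mem_closedBall_self hγ⟩⟩
  unfold advLoss
  rw [iSup_ite_one_zero]
  refine if_congr ⟨fun ⟨⟨x', hx'⟩, h⟩ => ?_, fun h => ?_⟩ rfl rfl
  · have := hg (inner_mem_Icc_of_mem_closedBall hw hx').2
    simp only [neg_one_mul] at h
    linarith
  · refine ⟨⟨x + γ • w, add_smul_mem_closedBall hw (abs_of_nonneg hγ).le⟩, ?_⟩
    show -1 * (g ⟪w, x + γ • w⟫ + b) ≤ 0
    rw [inner_add_smul_self hw]
    linarith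

lemma innerRisk_advLoss_glm (hγ : 0 ≤ γ) (hg : Monotone g) (hw : ‖w‖ = 1) (b : ℝ)
    (x : EuclideanSpace ℝ (Fin d)) (η : ℝ) :
    innerRisk (advLoss γ) (fun z => g ⟪w, z⟫ + b) x η = glmAdvRisk g γ η ⟪w, x⟫ b := by
  rw [innerRisk, advLoss_glm_one hγ hg hw, advLoss_glm_neg_one hγ hg hw, glmAdvRisk]

end Risks

section Abar

variable {g : ℝ → ℝ} {t : ℝ}

lemma le_Abar (hg : Continuous g) (γ : ℝ) {s : ℝ} (hs : s ∈ Icc (-t) t) :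
    g s - g (s - γ) ≤ Abar g γ t :=
  le_csSup (isCompact_Icc.image (by fun_prop)).bddAbove (mem_image_of_mem _ hs)

lemma exists_eq_Abar (hg : Continuous g) (γ : ℝ) (ht : 0 ≤ t) :
    ∃ s ∈ Icc (-t) t, g s - g (s - γ) = Abar g γ t :=
  (isCompact_Icc.image (by fun_prop)).sSup_mem ((nonempty_Icc.2 (by linarith)).image _)

lemma Alow_le (hg : Continuous g) (γ : ℝ) {s : ℝ} (hs : s ∈ Icc (-t) t) :
    Alow g γ t ≤ g s - g (s + γ) :=
  csInf_le (isCompact_Icc.image (by fun_prop)).bddBelow (mem_image_of_mem _ hs)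

lemma exists_eq_Alow (hg : Continuous g) (γ : ℝ) (ht : 0 ≤ t) :
    ∃ s ∈ Icc (-t) t, g s - g (s + γ) = Alow g γ t :=
  (isCompact_Icc.image (by fun_prop)).sInf_mem ((nonempty_Icc.2 (by linarith)).image _)

end Abar

lemma Monotone.mem_Ioo_of_mem_Icc {g : ℝ → ℝ} (hg : Monotone g) {γ G : ℝ} (hg1 : g (1 + γ) < G)
    (hg2 : -G < g (-1 - γ)) {s : ℝ} (hs : s ∈ Icc (-1 - γ) (1 + γ)) : g s ∈ Ioo (-G) G :=
  ⟨hg2.trans_le (hg hs.1), (hg hs.2).trans_lt hg1⟩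

section MinimalRisks

variable {γ ρ G η : ℝ} {g : ℝ → ℝ} {x : EuclideanSpace ℝ (Fin d)}

lemma minInnerRisk_marginLoss_Hg (hd : 2 ≤ d) (hρ : 0 < ρ) (hg : Monotone g) (hG : 0 ≤ G)
    (hη : η ∈ Icc (0 : ℝ) 1) :
    minInnerRisk (marginLoss (phiRho ρ)) (Hg d g G) x η =
      min (marginRiskAt (phiRho ρ) η (g ‖x‖ + G)) (marginRiskAt (phiRho ρ) η (g (-‖x‖) - G)) := by
  apply minInnerRisk_eq_of_forall_le
  · rintro _ ⟨w, b, hw, hb, rfl⟩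
    obtain ⟨hs₁, hs₂⟩ := inner_mem_Icc_of_norm_eq_one hw x
    obtain ⟨hb₁, hb₂⟩ := abs_le.1 hb
    rw [innerRisk_marginLoss]
    exact min_marginRiskAt_le hρ hη (by linarith [hg hs₁]) (by linarith [hg hs₂])
  · have hE := one_lt_rank_euclideanSpace hd
    have hx : 0 ≤ ‖x‖ := norm_nonneg x
    rcases min_choice (marginRiskAt (phiRho ρ) η (g ‖x‖ + G))
      (marginRiskAt (phiRho ρ) η (g (-‖x‖) - G)) with h | h <;> rw [h]
    · obtain ⟨w, hw, hwx⟩ := exists_norm_eq_one_inner_eq hE (right_mem_Icc.2 (by linarith))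
      exact ⟨_, ⟨w, G, hw, (abs_of_nonneg hG).le, rfl⟩, by rw [innerRisk_marginLoss, hwx]⟩
    · obtain ⟨w, hw, hwx⟩ := exists_norm_eq_one_inner_eq hE (left_mem_Icc.2 (by linarith))
      refine ⟨_, ⟨w, -G, hw, by rw [abs_neg, abs_of_nonneg hG], rfl⟩, ?_⟩
      rw [innerRisk_marginLoss, hwx, sub_eq_add_neg]

lemma minInnerRisk_advLoss_Hg (hd : 2 ≤ d) (hγ : 0 ≤ γ) (hg : Monotone g) (hG : 0 ≤ G)
    (hg1 : g (1 + γ) < G) (hg2 : -G < g (-1 - γ)) (hx : ‖x‖ ≤ 1) :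
    minInnerRisk (advLoss γ) (Hg d g G) x η = min η (1 - η) := by
  apply minInnerRisk_eq_of_forall_le
  · rintro _ ⟨w, b, hw, -, rfl⟩
    rw [innerRisk_advLoss_glm hγ hg hw, glmAdvRisk]
    have : g (⟪w, x⟫ - γ) ≤ g (⟪w, x⟫ + γ) := hg (by linarith)
    have := min_le_left η (1 - η)
    have := min_le_right η (1 - η)
    split_ifs <;> linarith
  · obtain ⟨w, hw, -⟩ := exists_norm_eq_one_inner_eq (one_lt_rank_euclideanSpace hd)
      (⟨by linarith [norm_nonneg x], norm_nonneg x⟩ : (0 : ℝ) ∈ Icc (-‖x‖) ‖x‖)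
    obtain ⟨hs₁, hs₂⟩ := inner_mem_Icc_of_norm_eq_one hw x
    obtain ⟨hsub₁, hsub₂⟩ :=
      hg.mem_Ioo_of_mem_Icc hg1 hg2 (s := ⟪w, x⟫ - γ) ⟨by linarith, by linarith⟩
    obtain ⟨hadd₁, hadd₂⟩ :=
      hg.mem_Ioo_of_mem_Icc hg1 hg2 (s := ⟪w, x⟫ + γ) ⟨by linarith, by linarith⟩
    rcases min_choice η (1 - η) with h | h <;> rw [h]
    · refine ⟨_, ⟨w, -G, hw, by rw [abs_neg, abs_of_nonneg hG], rfl⟩, ?_⟩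
      rw [innerRisk_advLoss_glm hγ hg hw, glmAdvRisk, if_pos (by linarith), if_neg (by linarith)]
      ring
    · refine ⟨_, ⟨w, G, hw, (abs_of_nonneg hG).le, rfl⟩, ?_⟩
      rw [innerRisk_advLoss_glm hγ hg hw, glmAdvRisk, if_neg (by linarith), if_pos (by linarith)]
      ring

end MinimalRisks

section Necessity

variable {γ ρ G : ℝ} {g : ℝ → ℝ} {x : EuclideanSpace ℝ (Fin d)}

lemma glmAdvRisk_le_of_calibrated
    (hcal : Calibrated (Hg d g G) (marginLoss (phiRho ρ)) (advLoss γ)) (hd : 2 ≤ d) (hγ : 0 ≤ γ)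
    (hρ : 0 < ρ) (hg : Monotone g) (hG : 0 ≤ G) (hg1 : g (1 + γ) < G) (hg2 : -G < g (-1 - γ))
    {η : ℝ} (hη : η ∈ Icc (0 : ℝ) 1) (hx : ‖x‖ ≤ 1) {s b : ℝ} (hs : s ∈ Icc (-‖x‖) ‖x‖)
    (hb : |b| ≤ G)
    (hmin : marginRiskAt (phiRho ρ) η (g s + b) ≤
      min (marginRiskAt (phiRho ρ) η (g ‖x‖ + G)) (marginRiskAt (phiRho ρ) η (g (-‖x‖) - G))) :
    glmAdvRisk g γ η s b ≤ min η (1 - η) := by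
  obtain ⟨w, hw, rfl⟩ := exists_norm_eq_one_inner_eq (one_lt_rank_euclideanSpace hd) hs
  have := hcal.innerRisk_le_of_le_minInnerRisk hη hx ⟨w, b, hw, hb, rfl⟩
    (by rwa [innerRisk_marginLoss, minInnerRisk_marginLoss_Hg hd hρ hg hG hη])
  rwa [innerRisk_advLoss_glm hγ hg hw, minInnerRisk_advLoss_Hg hd hγ hg hG hg1 hg2 hx] at this

lemma phiRho_eq_of_calibrated
    (hcal : Calibrated (Hg d g G) (marginLoss (phiRho ρ)) (advLoss γ)) (hd : 2 ≤ d) (hγ : 0 ≤ γ)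
    (hρ : 0 < ρ) (hg : Monotone g) (hG : 0 ≤ G) (hg1 : g (1 + γ) < G) (hg2 : -G < g (-1 - γ))
    (hgsum : 0 ≤ g (-‖x‖) + g ‖x‖) (hx : ‖x‖ ≤ 1) :
    phiRho ρ (G - g (-‖x‖)) = phiRho ρ (g ‖x‖ + G) := by
  have hr := norm_nonneg x
  have hbound (s : ℝ) (hs : s ∈ Icc (-1 - γ) (1 + γ)) := hg.mem_Ioo_of_mem_Icc hg1 hg2 hs
  obtain ⟨hR, -⟩ := hbound ‖x‖ ⟨by linarith, by linarith⟩
  obtain ⟨-, hL⟩ := hbound (-‖x‖) ⟨by linarith, by linarith⟩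
  obtain ⟨hsub, -⟩ := hbound (‖x‖ - γ) ⟨by linarith, by linarith⟩
  obtain ⟨hadd, -⟩ := hbound (‖x‖ + γ) ⟨by linarith, by linarith⟩
  set φL := phiRho ρ (G - g (-‖x‖))
  set φR := phiRho ρ (g ‖x‖ + G)
  have hφL := phiRho_le_one ρ (G - g (-‖x‖))
  by_contra hne
  have hlt : φR < φL := (phiRho_antitone hρ (by linarith)).lt_of_ne (Ne.symm hne)
  -- At this `η < 1/2` the scores `g ‖x‖ + G` and `g (-‖x‖) - G` have the same margin risk,
  -- so the former is margin-optimal although its adversarial risk is `1 - η > η`.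
  have hden : 0 < (1 - φL) + (1 - φR) := by linarith
  set η := (1 - φL) / ((1 - φL) + (1 - φR))
  have hηden : η * ((1 - φL) + (1 - φR)) = 1 - φL := div_mul_cancel₀ _ hden.ne'
  have hη : η ∈ Icc (0 : ℝ) 1 :=
    ⟨div_nonneg (by linarith) hden.le, (div_le_one hden).2 (by linarith)⟩
  have hhalf : η < 1 / 2 := by rw [div_lt_iff₀ hden]; linarith
  have hmin : marginRiskAt (phiRho ρ) η (g ‖x‖ + G) ≤ marginRiskAt (phiRho ρ) η (g (-‖x‖) - G) := by
    rw [marginRiskAt_of_nonneg hρ (by linarith), marginRiskAt_of_nonpos hρ (by linarith), neg_sub]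
    linarith
  have := glmAdvRisk_le_of_calibrated hcal hd hγ hρ hg hG hg1 hg2 hη hx
    (right_mem_Icc.2 (by linarith)) (abs_of_nonneg hG).le (le_min le_rfl hmin)
  rw [glmAdvRisk, if_neg (by linarith), if_pos (by linarith), min_eq_left (by linarith)] at this
  linarith

lemma phiRho_lt_Abar_of_calibrated
    (hcal : Calibrated (Hg d g G) (marginLoss (phiRho ρ)) (advLoss γ)) (hd : 2 ≤ d) (hγ : 0 ≤ γ)
    (hρ : 0 < ρ) (hg : Monotone g) (hgc : Continuous g) (hG : 0 ≤ G) (hg1 : g (1 + γ) < G)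
    (hg2 : -G < g (-1 - γ)) (hx : ‖x‖ ≤ 1)
    (hLR : phiRho ρ (G - g (-‖x‖)) = phiRho ρ (g ‖x‖ + G)) :
    phiRho ρ (G - g (-‖x‖)) < phiRho ρ (Abar g γ ‖x‖) := by
  by_contra! hc
  obtain ⟨s, hs, hsA⟩ := exists_eq_Abar hgc γ (norm_nonneg x)
  have hb : |-g (s - γ)| ≤ G := by
    rw [abs_neg]
    exact (abs_lt.2 (hg.mem_Ioo_of_mem_Icc hg1 hg2 ⟨by linarith [hs.1], by linarith [hs.2]⟩)).le
  have hneg : g (-‖x‖) - G ≤ 0 := by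
    have := hg.mem_Ioo_of_mem_Icc hg1 hg2 (s := -‖x‖) ⟨by linarith, by linarith [norm_nonneg x]⟩
    linarith [this.2]
  have := glmAdvRisk_le_of_calibrated hcal hd hγ hρ hg hG hg1 hg2 ⟨zero_le_one, le_rfl⟩ hx hs hb ?_
  · rw [glmAdvRisk, if_pos (by linarith)] at this
    norm_num at this
  · simp only [marginRiskAt, one_mul, sub_self, zero_mul, add_zero, ← sub_eq_add_neg, hsA]
    exact le_min (hc.trans hLR.le) ((phiRho_le_one ρ _).trans (phiRho_of_nonpos hρ hneg).ge)

lemma phiRho_lt_neg_Alow_of_calibrated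
    (hcal : Calibrated (Hg d g G) (marginLoss (phiRho ρ)) (advLoss γ)) (hd : 2 ≤ d) (hγ : 0 ≤ γ)
    (hρ : 0 < ρ) (hg : Monotone g) (hgc : Continuous g) (hG : 0 ≤ G) (hg1 : g (1 + γ) < G)
    (hg2 : -G < g (-1 - γ)) (hx : ‖x‖ ≤ 1) :
    phiRho ρ (G - g (-‖x‖)) < phiRho ρ (-Alow g γ ‖x‖) := by
  by_contra! hc
  obtain ⟨s, hs, hsA⟩ := exists_eq_Alow hgc γ (norm_nonneg x)
  have hb : |-g (s + γ)| ≤ G := by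
    rw [abs_neg]
    exact (abs_lt.2 (hg.mem_Ioo_of_mem_Icc hg1 hg2 ⟨by linarith [hs.1], by linarith [hs.2]⟩)).le
  have hneg : -(g ‖x‖ + G) ≤ 0 := by
    have := hg.mem_Ioo_of_mem_Icc hg1 hg2 (s := ‖x‖) ⟨by linarith [norm_nonneg x], by linarith⟩
    linarith [this.1]
  have := glmAdvRisk_le_of_calibrated hcal hd hγ hρ hg hG hg1 hg2 ⟨le_rfl, zero_le_one⟩ hx hs hb ?_
  · rw [glmAdvRisk, zero_mul, zero_add, if_pos (by linarith)] at this
    norm_num at this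
  · simp only [marginRiskAt, zero_mul, sub_zero, one_mul, zero_add, ← sub_eq_add_neg, hsA, neg_sub]
    exact le_min ((phiRho_le_one ρ _).trans (phiRho_of_nonpos hρ hneg).ge) hc

end Necessity

lemma exists_pos_glmAdvRisk_le {ρ η : ℝ} (hρ : 0 < ρ) (hη : η ∈ Icc (0 : ℝ) 1) (g : ℝ → ℝ) (γ : ℝ)
    {lo hi Amax Bmax : ℝ} (hlo : lo < 0) (hhi : 0 ≤ hi) (hφ : phiRho ρ (-lo) = phiRho ρ hi)
    (hA : phiRho ρ hi < phiRho ρ Amax) (hB : phiRho ρ hi < phiRho ρ Bmax) :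
    ∃ δ > 0, ∀ s b : ℝ, g s + b ∈ Icc lo hi →
      (g (s - γ) + b ≤ 0 → g s + b ≤ Amax) → (0 ≤ g (s + γ) + b → -(g s + b) ≤ Bmax) →
      marginRiskAt (phiRho ρ) η (g s + b) <
        min (marginRiskAt (phiRho ρ) η hi) (marginRiskAt (phiRho ρ) η lo) + δ →
      glmAdvRisk g γ η s b ≤ min η (1 - η) := by
  obtain ⟨hη0, hη1⟩ := hη
  set c := phiRho ρ hi
  have hc : c < 1 := hφ ▸ phiRho_lt_one hρ (neg_pos.2 hlo)
  have hhi' : marginRiskAt (phiRho ρ) η hi = η * c + (1 - η) := marginRiskAt_of_nonneg hρ hhi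
  have hlo' : marginRiskAt (phiRho ρ) η lo = η + (1 - η) * c := by
    rw [marginRiskAt_of_nonpos hρ hlo.le, hφ]
  have hpos := fun {u v : ℝ} => le_marginRiskAt_of_nonneg (u := u) (v := v) hρ hη0
  have hneg := fun {u v : ℝ} => le_marginRiskAt_of_nonpos (u := u) (v := v) hρ hη1
  rw [hhi', hlo']
  -- `δ` is the least excess margin risk of a score whose adversarial error is not allowed at `η`.
  rcases lt_trichotomy η (1 / 2) with hlt | rfl | hgt
  · refine ⟨min ((1 - 2 * η) * (1 - c)) ((1 - η) * (phiRho ρ Bmax - c)),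
      lt_min (by nlinarith) (by nlinarith), fun s b hu h₁ h₂ hnear => ?_⟩
    have h₂off : ¬ 0 ≤ g (s + γ) + b := by
      intro h
      have := min_le_left ((1 - 2 * η) * (1 - c)) ((1 - η) * (phiRho ρ Bmax - c))
      have := min_le_right ((1 - 2 * η) * (1 - c)) ((1 - η) * (phiRho ρ Bmax - c))
      rw [min_eq_right (by nlinarith)] at hnear
      rcases le_total 0 (g s + b) with hu0 | hu0
      · linarith [hpos hu0 hu.2]
      · linarith [hneg hu0 (h₂ h)]
    rw [glmAdvRisk, if_neg h₂off, min_eq_left (by linarith)]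
    split_ifs <;> linarith
  · refine ⟨min (phiRho ρ Amax - c) (phiRho ρ Bmax - c) / 2,
      by have := lt_min (sub_pos.2 hA) (sub_pos.2 hB); linarith, fun s b hu h₁ h₂ hnear => ?_⟩
    have := min_le_left (phiRho ρ Amax - c) (phiRho ρ Bmax - c)
    have := min_le_right (phiRho ρ Amax - c) (phiRho ρ Bmax - c)
    rw [min_eq_left (by linarith)] at hnear
    have hboth : ¬ (g (s - γ) + b ≤ 0 ∧ 0 ≤ g (s + γ) + b) := by
      rintro ⟨hp₁, hp₂⟩
      rcases le_total 0 (g s + b) with hu0 | hu0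
      · linarith [hpos hu0 (h₁ hp₁)]
      · linarith [hneg hu0 (h₂ hp₂)]
    rw [glmAdvRisk, min_eq_left (by norm_num)]
    split_ifs with hp₁ hp₂
    · exact absurd ⟨hp₁, hp₂⟩ hboth
    all_goals norm_num
  · refine ⟨min ((2 * η - 1) * (1 - c)) (η * (phiRho ρ Amax - c)),
      lt_min (by nlinarith) (by nlinarith), fun s b hu h₁ h₂ hnear => ?_⟩
    have h₁off : ¬ g (s - γ) + b ≤ 0 := by
      intro h
      have := min_le_left ((2 * η - 1) * (1 - c)) (η * (phiRho ρ Amax - c))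
      have := min_le_right ((2 * η - 1) * (1 - c)) (η * (phiRho ρ Amax - c))
      rw [min_eq_left (by nlinarith)] at hnear
      rcases le_total 0 (g s + b) with hu0 | hu0
      · linarith [hpos hu0 (h₁ h)]
      · have := hneg hu0 (neg_le_neg hu.1)
        rw [hφ] at this
        linarith
    rw [glmAdvRisk, if_neg h₁off, min_eq_right (by linarith)]
    split_ifs <;> linarith

lemma exists_delta_of_phiRho_lt {γ ρ G η ε : ℝ} {g : ℝ → ℝ} {x : EuclideanSpace ℝ (Fin d)}
    (hd : 2 ≤ d) (hγ : 0 ≤ γ) (hρ : 0 < ρ) (hg : Monotone g) (hgc : Continuous g) (hG : 0 ≤ G)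
    (hg1 : g (1 + γ) < G) (hg2 : -G < g (-1 - γ)) (hη : η ∈ Icc (0 : ℝ) 1) (hx : ‖x‖ ≤ 1)
    (hε : 0 < ε) (hLR : phiRho ρ (G - g (-‖x‖)) = phiRho ρ (g ‖x‖ + G))
    (hA : phiRho ρ (G - g (-‖x‖)) < phiRho ρ (Abar g γ ‖x‖))
    (hB : phiRho ρ (G - g (-‖x‖)) < phiRho ρ (-Alow g γ ‖x‖)) :
    ∃ δ > 0, ∀ f ∈ Hg d g G,
      innerRisk (marginLoss (phiRho ρ)) f x η <
        minInnerRisk (marginLoss (phiRho ρ)) (Hg d g G) x η + δ →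
      innerRisk (advLoss γ) f x η < minInnerRisk (advLoss γ) (Hg d g G) x η + ε := by
  have hr := norm_nonneg x
  have hbound (s : ℝ) (hs : s ∈ Icc (-1 - γ) (1 + γ)) := hg.mem_Ioo_of_mem_Icc hg1 hg2 hs
  obtain ⟨hR, -⟩ := hbound ‖x‖ ⟨by linarith, by linarith⟩
  obtain ⟨-, hL⟩ := hbound (-‖x‖) ⟨by linarith, by linarith⟩
  obtain ⟨δ, hδ, hgap⟩ := exists_pos_glmAdvRisk_le hρ hη g γ (lo := g (-‖x‖) - G)
    (hi := g ‖x‖ + G) (by linarith) (by linarith) (by rwa [neg_sub]) (hLR ▸ hA) (hLR ▸ hB)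
  refine ⟨δ, hδ, ?_⟩
  rintro _ ⟨w, b, hw, hb, rfl⟩ hnear
  rw [innerRisk_marginLoss, minInnerRisk_marginLoss_Hg hd hρ hg hG hη] at hnear
  rw [innerRisk_advLoss_glm hγ hg hw, minInnerRisk_advLoss_Hg hd hγ hg hG hg1 hg2 hx]
  have hs := inner_mem_Icc_of_norm_eq_one hw x
  obtain ⟨hb₁, hb₂⟩ := abs_le.1 hb
  refine (hgap _ _ ⟨?_, ?_⟩ (fun h => ?_) (fun h => ?_) hnear).trans_lt (lt_add_of_pos_right _ hε)
  · linarith [hg hs.1]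
  · linarith [hg hs.2]
  · linarith [le_Abar hgc γ hs]
  · linarith [Alow_le hgc γ hs]

theorem stmt13_general (d : ℕ) (hd : 2 ≤ d) (γ : ℝ) (hγ0 : 0 < γ)
    (ρ : ℝ) (hρ : 0 < ρ)
    (g : ℝ → ℝ) (hgmono : Monotone g) (hgcont : Continuous g)
    (G : ℝ) (hG : 0 ≤ G) (hg1 : g (1 + γ) < G) (hg2 : -G < g (-1 - γ))
    (hgsum : ∀ t ∈ Set.Icc (0:ℝ) 1, 0 ≤ g (-t) + g t) :
    Calibrated (Hg d g G) (marginLoss (phiRho ρ)) (advLoss γ) ↔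
      ∀ t ∈ Set.Icc (0:ℝ) 1,
        phiRho ρ (G - g (-t)) = phiRho ρ (g t + G) ∧
        phiRho ρ (G - g (-t)) <
          min (phiRho ρ (Abar g γ t)) (phiRho ρ (-(Alow g γ t))) := by
  have hγ := hγ0.le
  constructor
  · intro hcal t ht
    have : Nontrivial (EuclideanSpace ℝ (Fin d)) :=
      rank_pos_iff_nontrivial.1 (zero_lt_one.trans (one_lt_rank_euclideanSpace hd))
    obtain ⟨x, rfl⟩ := exists_norm_eq (EuclideanSpace ℝ (Fin d)) ht.1
    have hLR := phiRho_eq_of_calibrated hcal hd hγ hρ hgmono hG hg1 hg2 (hgsum _ ht) ht.2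
    exact ⟨hLR, lt_min
      (phiRho_lt_Abar_of_calibrated hcal hd hγ hρ hgmono hgcont hG hg1 hg2 ht.2 hLR)
      (phiRho_lt_neg_Alow_of_calibrated hcal hd hγ hρ hgmono hgcont hG hg1 hg2 ht.2)⟩
  · intro hcond ε hε η hη x hx
    obtain ⟨hLR, hAB⟩ := hcond ‖x‖ ⟨norm_nonneg x, hx⟩
    rw [lt_min_iff] at hAB
    exact exists_delta_of_phiRho_lt hd hγ hρ hgmono hgcont hG hg1 hg2 hη hx hε hLR hAB.1 hAB.2

theorem stmt13 (d : ℕ) (hd : 2 ≤ d) (γ : ℝ) (hγ0 : 0 < γ) (hγ1 : γ < 1)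
    (ρ : ℝ) (hρ : 0 < ρ)
    (g : ℝ → ℝ) (hgmono : Monotone g) (hgcont : Continuous g)
    (G : ℝ) (hG : 0 ≤ G) (hg1 : g (1 + γ) < G) (hg2 : -G < g (-1 - γ))
    (hgsum : ∀ t ∈ Set.Icc (0:ℝ) 1, 0 ≤ g (-t) + g t) :
    Calibrated (Hg d g G) (marginLoss (phiRho ρ)) (advLoss γ) ↔
      ∀ t ∈ Set.Icc (0:ℝ) 1,
        phiRho ρ (G - g (-t)) = phiRho ρ (g t + G) ∧
        phiRho ρ (G - g (-t)) <
          min (phiRho ρ (Abar g γ t)) (phiRho ρ (-(Alow g γ t))) :=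
  stmt13_general d hd γ hγ0 ρ hρ g hgmono hgcont G hG hg1 hg2 hgsum

end
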